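/- Let k ≥ 1 and ν > 0, and suppose there is a constant C_k > 0 such that for every real number α and every real N ≥ 1 there exists an integer n with 1 ≤ n ≤ N and ‖α n^k‖ ≤ C_k N^{−ν}. Then there is a constant C'_k > 0 such that for all real numbers α₁ and α_k and all sufficiently large N, there exists an integer n with 1 ≤ n ≤ N and ‖α_k n^k + α₁ n‖ ≤ C'_k N^{−ν/(2+ν)}. -/

import Mathlib

/-!
Dirichlet's theorem gives `q ≤ Q` with `‖q α₁‖ ≤ 1/Q`, and the hypothesis applied to `α_k q^k`
with bound `M` gives `m ≤ M` with `‖α_k q^k m^k‖ ≤ C_k M^{-ν}`. For `n = q m ≤ Q M` the linear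
term contributes at most `m ‖q α₁‖ ≤ M / Q`, so `‖α_k n^k + α₁ n‖ ≤ C_k M^{-ν} + M / Q`.
Taking `Q M = N` and balancing `M^{-ν} = M / Q` forces `M = N^{1/(2+ν)}`.
-/

/-- Distance from a real number to the nearest integer. -/
noncomputable def nearestIntDist (x : ℝ) : ℝ := |x - round x|

lemma nearestIntDist_nonneg (x : ℝ) : 0 ≤ nearestIntDist x :=
  abs_nonneg _

lemma nearestIntDist_le_abs_sub_intCast (x : ℝ) (m : ℤ) : nearestIntDist x ≤ |x - m| :=
  round_le x m

lemma nearestIntDist_add_le (x y : ℝ) :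
    nearestIntDist (x + y) ≤ nearestIntDist x + nearestIntDist y :=
  calc nearestIntDist (x + y) ≤ |(x - round x) + (y - round y)| := by
        simpa [add_sub_add_comm] using nearestIntDist_le_abs_sub_intCast (x + y) (round x + round y)
    _ ≤ nearestIntDist x + nearestIntDist y := abs_add_le _ _

lemma nearestIntDist_natCast_mul_le (m : ℕ) (y : ℝ) :
    nearestIntDist (m * y) ≤ m * nearestIntDist y :=
  calc nearestIntDist (m * y) ≤ |(m : ℝ) * (y - round y)| := by
        simpa [mul_sub] using nearestIntDist_le_abs_sub_intCast (m * y) (m * round y)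
    _ = m * nearestIntDist y := by rw [abs_mul, Nat.abs_cast]; rfl

/-- Dirichlet's approximation theorem with a real bound `Q`. -/
lemma exists_nat_le_nearestIntDist_mul_le (α Q : ℝ) (hQ : 1 ≤ Q) :
    ∃ q : ℕ, 1 ≤ q ∧ (q : ℝ) ≤ Q ∧ nearestIntDist (q * α) ≤ 1 / Q := by
  have hQfloor : 0 < ⌊Q⌋₊ := Nat.floor_pos.mpr hQ
  obtain ⟨q, hq0, hqQ, hq⟩ := Real.exists_nat_abs_mul_sub_round_le α hQfloor
  refine ⟨q, hq0, (Nat.cast_le.mpr hqQ).trans (Nat.floor_le (by linarith)), hq.trans ?_⟩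
  gcongr
  exact (Nat.lt_floor_add_one Q).le

lemma nearestIntDist_binomial_natCast_mul_le (k q m : ℕ) (α₁ αk : ℝ) :
    nearestIntDist (αk * ((q * m : ℕ) : ℝ) ^ k + α₁ * ((q * m : ℕ) : ℝ)) ≤
      nearestIntDist (αk * (q : ℝ) ^ k * (m : ℝ) ^ k) + m * nearestIntDist (q * α₁) := by
  have hsplit : αk * ((q * m : ℕ) : ℝ) ^ k + α₁ * ((q * m : ℕ) : ℝ) =
      αk * (q : ℝ) ^ k * (m : ℝ) ^ k + m * (q * α₁) := by push_cast; ring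
  rw [hsplit]
  exact (nearestIntDist_add_le _ _).trans (by gcongr; exact nearestIntDist_natCast_mul_le m _)

lemma exists_nearestIntDist_binomial_le_of_monomial (k : ℕ) (ν Ck : ℝ)
    (H : ∀ (α : ℝ) (N : ℝ), 1 ≤ N → ∃ n : ℕ, 1 ≤ n ∧ (n : ℝ) ≤ N ∧
      nearestIntDist (α * (n : ℝ) ^ k) ≤ Ck * N ^ (-ν))
    (α₁ αk M Q : ℝ) (hM : 1 ≤ M) (hQ : 1 ≤ Q) :
    ∃ n : ℕ, 1 ≤ n ∧ (n : ℝ) ≤ Q * M ∧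
      nearestIntDist (αk * (n : ℝ) ^ k + α₁ * (n : ℝ)) ≤ Ck * M ^ (-ν) + M / Q := by
  obtain ⟨q, hq1, hqQ, hqα⟩ := exists_nat_le_nearestIntDist_mul_le α₁ Q hQ
  obtain ⟨m, hm1, hmM, hmα⟩ := H (αk * (q : ℝ) ^ k) M hM
  refine ⟨q * m, Nat.one_le_iff_ne_zero.mpr (by positivity), ?_, ?_⟩
  · push_cast
    gcongr
  · calc _ ≤ nearestIntDist (αk * (q : ℝ) ^ k * (m : ℝ) ^ k) + m * nearestIntDist (q * α₁) :=
          nearestIntDist_binomial_natCast_mul_le k q m α₁ αk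
      _ ≤ Ck * M ^ (-ν) + M * (1 / Q) := by gcongr; exact nearestIntDist_nonneg _
      _ = Ck * M ^ (-ν) + M / Q := by rw [mul_one_div]

theorem monomial_to_binomial_small_fractional_parts_general (k : ℕ)
    (ν : ℝ) (hν : 0 < ν) (Ck : ℝ) (hCk : 0 < Ck)
    (H : ∀ (α : ℝ) (N : ℝ), 1 ≤ N → ∃ n : ℕ, 1 ≤ n ∧ (n : ℝ) ≤ N ∧
      nearestIntDist (α * (n : ℝ) ^ k) ≤ Ck * N ^ (-ν)) :
    ∃ C' : ℝ, 0 < C' ∧ ∃ N₀ : ℝ, ∀ (α₁ αk : ℝ) (N : ℝ), N₀ ≤ N →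
      ∃ n : ℕ, 1 ≤ n ∧ (n : ℝ) ≤ N ∧
        nearestIntDist (αk * (n : ℝ) ^ k + α₁ * (n : ℝ)) ≤ C' * N ^ (-ν / (2 + ν)) := by
  refine ⟨Ck + 1, by linarith, 1, fun α₁ αk N hN => ?_⟩
  have hN0 : 0 < N := by linarith
  have h2ν : 0 < 2 + ν := by linarith
  set M := N ^ (1 / (2 + ν))
  set Q := N ^ ((1 + ν) / (2 + ν))
  have hQM : Q * M = N := by
    rw [← Real.rpow_add hN0, ← add_div, add_comm, ← add_assoc, one_add_one_eq_two,
      div_self h2ν.ne', Real.rpow_one]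
  have hMν : M ^ (-ν) = N ^ (-ν / (2 + ν)) := by
    rw [← Real.rpow_mul hN0.le, one_div_mul_eq_div, div_eq_mul_inv, neg_mul]
  have hMQ : M / Q = N ^ (-ν / (2 + ν)) := by
    rw [← Real.rpow_sub hN0, ← sub_div, sub_add_cancel_left]
  obtain ⟨n, hn1, hnN, hn⟩ := exists_nearestIntDist_binomial_le_of_monomial k ν Ck H α₁ αk M Q
    (Real.one_le_rpow hN (by positivity)) (Real.one_le_rpow hN (by positivity))
  refine ⟨n, hn1, hQM ▸ hnN, hn.trans_eq ?_⟩
  rw [hMν, hMQ]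
  ring

/-- **Theorem 2(b) reduction step (Baker).** Let `k ≥ 1` and `ν > 0`. Suppose there is a
constant `C_k > 0` such that for every real `α` and every real `N ≥ 1` there is an
integer `1 ≤ n ≤ N` with `‖α n^k‖ ≤ C_k N^{−ν}`. Then there is a constant `C'_k > 0`
such that for all real `α₁, α_k` and all sufficiently large `N` there is an integer
`1 ≤ n ≤ N` with `‖α_k n^k + α₁ n‖ ≤ C'_k N^{−ν/(2+ν)}`. -/
theorem monomial_to_binomial_small_fractional_parts (k : ℕ) (hk : 1 ≤ k)
    (ν : ℝ) (hν : 0 < ν) (Ck : ℝ) (hCk : 0 < Ck)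
    (H : ∀ (α : ℝ) (N : ℝ), 1 ≤ N → ∃ n : ℕ, 1 ≤ n ∧ (n : ℝ) ≤ N ∧
      nearestIntDist (α * (n : ℝ) ^ k) ≤ Ck * N ^ (-ν)) :
    ∃ C' : ℝ, 0 < C' ∧ ∃ N₀ : ℝ, ∀ (α₁ αk : ℝ) (N : ℝ), N₀ ≤ N →
      ∃ n : ℕ, 1 ≤ n ∧ (n : ℝ) ≤ N ∧
        nearestIntDist (αk * (n : ℝ) ^ k + α₁ * (n : ℝ)) ≤ C' * N ^ (-ν / (2 + ν)) :=
  monomial_to_binomial_small_fractional_parts_general k ν hν Ck hCk H
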